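/- arXiv:2602.12169 — 3 statements merged into one kernel-verified Lean document; each statement's English description precedes it below -/
import Mathlib

section
/- Let G be a finite simple graph, let U_L be the set of leaves of G, and let U_2 = { v : deg_G(v) ≥ 2 and the minimum distance from v to U_L equals 2 }. Then I(G,−1) = I(G − U_2, −1), where G − U_2 denotes the induced subgraph of G on the complement of U_2. -/
open Finset Polynomial

/-- Every subset of a finite type gets a `Fintype` instance (classically). -/
noncomputable instance fintypeOfSet {V : Type*} [Finite V] (s : Set V) : Fintype ↥s :=
  Fintype.ofFinite _

/-- `s` is an independent set of the graph `G`: no two of its vertices are adjacent. -/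
def IsIndepSet {V : Type*} (G : SimpleGraph V) (s : Finset V) : Prop :=
  ∀ u ∈ s, ∀ v ∈ s, ¬ G.Adj u v

/-- The finset of all independent sets of `G`. -/
noncomputable def indepFinsets {V : Type*} [Fintype V] (G : SimpleGraph V) :
    Finset (Finset V) :=
  @Finset.filter _ (fun s => IsIndepSet G s) (Classical.decPred _) Finset.univ

/-- `sCount G i` is the number of independent sets of size `i` in `G`. -/
noncomputable def sCount {V : Type*} [Fintype V] (G : SimpleGraph V) (i : ℕ) : ℕ :=
  ((indepFinsets G).filter (fun s => s.card = i)).card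

/-- The independence number `α(G)`: the maximum size of an independent set. -/
noncomputable def indepNum {V : Type*} [Fintype V] (G : SimpleGraph V) : ℕ :=
  (indepFinsets G).sup Finset.card

/-- The independence polynomial `I(G,t) = Σ_i s_i(G) t^i ∈ ℤ[t]`. -/
noncomputable def indepPoly {V : Type*} [Fintype V] (G : SimpleGraph V) : Polynomial ℤ :=
  ∑ i ∈ Finset.range (indepNum G + 1), Polynomial.C (sCount G i : ℤ) * Polynomial.X ^ i

/-- The h-polynomial of the edge ideal of `G`:
`h_G(t) = Σ_i s_i(G) t^i (1-t)^{α(G)-i} ∈ ℤ[t]`. -/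
noncomputable def hPoly {V : Type*} [Fintype V] (G : SimpleGraph V) : Polynomial ℤ :=
  ∑ i ∈ Finset.range (indepNum G + 1),
    Polynomial.C (sCount G i : ℤ) * Polynomial.X ^ i *
      (1 - Polynomial.X) ^ (indepNum G - i)

/-- The degree of a vertex in a finite simple graph. -/
noncomputable def deg {V : Type*} [Fintype V] (G : SimpleGraph V) (v : V) : ℕ :=
  (@Finset.filter _ (fun u => G.Adj v u) (Classical.decPred _) Finset.univ).card

/-- A leaf of `G` is a vertex of degree `1`. -/
def IsLeaf {V : Type*} [Fintype V] (G : SimpleGraph V) (v : V) : Prop :=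
  deg G v = 1

/-- The minimum graph distance from `v` to the set of leaves of `G` equals `2`
(unreachable leaves are at infinite distance, hence do not count). -/
def DistToLeavesEqTwo {V : Type*} [Fintype V] (G : SimpleGraph V) (v : V) : Prop :=
  (∃ u, IsLeaf G u ∧ G.Reachable v u ∧ G.dist v u = 2) ∧
  (∀ u, IsLeaf G u → G.Reachable v u → 2 ≤ G.dist v u)

/-- `U_2(G)`: the set of vertices of degree at least `2` whose minimum distance to the
set of leaves of `G` equals `2`. -/
def U2 {V : Type*} [Fintype V] (G : SimpleGraph V) : Set V :=
  {v | 2 ≤ deg G v ∧ DistToLeavesEqTwo G v}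

section Aux

variable {V : Type*} [Fintype V]

open Classical in
/-- A canonical leaf at distance 2 from `v` (junk value `v` otherwise). -/
noncomputable def leafOf (G : SimpleGraph V) (v : V) : V :=
  if h : DistToLeavesEqTwo G v then Classical.choose h.1 else v

lemma leafOf_spec {G : SimpleGraph V} {v : V} (h : DistToLeavesEqTwo G v) :
    IsLeaf G (leafOf G v) ∧ G.Reachable v (leafOf G v) ∧ G.dist v (leafOf G v) = 2 := by
  rw [leafOf, dif_pos h]
  obtain ⟨h1, h2, h3⟩ := Classical.choose_spec h.1
  exact ⟨h1, h2, h3⟩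

lemma adj_of_adj_leafOf {G : SimpleGraph V} {v x : V} (h : DistToLeavesEqTwo G v)
    (hx : G.Adj (leafOf G v) x) : G.Adj v x := by
  obtain ⟨hleaf, hreach, hdist⟩ := leafOf_spec h
  obtain ⟨p, hp⟩ := hreach.exists_walk_length_eq_dist
  rw [hdist] at hp
  have h1 : G.Adj v (p.getVert 1) := by
    have := p.adj_getVert_succ (i := 0) (by omega)
    simpa using this
  have h2 : G.Adj (p.getVert 1) (leafOf G v) := by
    have := p.adj_getVert_succ (i := 1) (by omega)
    have h2' : p.getVert 2 = leafOf G v := by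
      have := p.getVert_length
      rw [hp] at this
      exact this
    rwa [show (1:ℕ)+1 = 2 from rfl, h2'] at this
  obtain ⟨w0, hw0⟩ := Finset.card_eq_one.mp hleaf
  have hmem : ∀ y, G.Adj (leafOf G v) y → y = w0 := by
    intro y hy
    have : y ∈ (@Finset.filter _ (fun u => G.Adj (leafOf G v) u)
        (Classical.decPred (fun u => G.Adj (leafOf G v) u)) Finset.univ) := by
      classical
      exact Finset.mem_filter.mpr ⟨Finset.mem_univ y, hy⟩
    rw [hw0] at this
    exact Finset.mem_singleton.mp this
  have e1 : x = w0 := hmem x hx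
  have e2 : p.getVert 1 = w0 := hmem _ h2.symm
  rw [e1, ← e2]
  exact h1

lemma not_adj_leafOf {G : SimpleGraph V} {v : V} (h : DistToLeavesEqTwo G v) :
    ¬ G.Adj v (leafOf G v) := by
  intro hadj
  have h2 := (leafOf_spec h).2.2
  have h1 := SimpleGraph.dist_eq_one_iff_adj.mpr hadj
  omega

lemma leafOf_ne {G : SimpleGraph V} {v : V} (h : DistToLeavesEqTwo G v) :
    leafOf G v ≠ v := by
  intro hEq
  have h2 := (leafOf_spec h).2.2
  rw [hEq] at h2
  simp [SimpleGraph.dist_self] at h2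

lemma leafOf_not_mem_U2 {G : SimpleGraph V} {v : V} (h : DistToLeavesEqTwo G v) :
    leafOf G v ∉ U2 G := by
  intro hmem
  have h1 := hmem.1
  have h2 := (leafOf_spec h).1
  rw [IsLeaf] at h2
  omega

end Aux
section Aux2

variable {V : Type*} [Fintype V]

/-- The elements of `s` lying in `U2 G`. -/
noncomputable def u2filt (G : SimpleGraph V) (s : Finset V) : Finset V :=
  @Finset.filter _ (fun x => x ∈ U2 G) (Classical.decPred _) s

lemma mem_u2filt {G : SimpleGraph V} {s : Finset V} {x : V} :
    x ∈ u2filt G s ↔ x ∈ s ∧ x ∈ U2 G := by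
  classical
  rw [u2filt]
  exact Finset.mem_filter

lemma min'_congr' {α : Type*} [LinearOrder α] {A B : Finset α} (h : A = B)
    (hA : A.Nonempty) (hB : B.Nonempty) : A.min' hA = B.min' hB := by
  subst h; rfl

open Classical in
/-- Toggle the canonical leaf associated to the minimal `U2`-vertex of `s`. -/
noncomputable def tog (G : SimpleGraph V) [LinearOrder V] (s : Finset V) : Finset V :=
  if h : (u2filt G s).Nonempty then
    (if leafOf G ((u2filt G s).min' h) ∈ s then s.erase (leafOf G ((u2filt G s).min' h))
     else insert (leafOf G ((u2filt G s).min' h)) s)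
  else s

lemma tog_spec (G : SimpleGraph V) [LinearOrder V] {s : Finset V}
    (hind : IsIndepSet G s) (hx : ∃ x ∈ s, x ∈ U2 G) :
    IsIndepSet G (tog G s) ∧ (∃ x ∈ tog G s, x ∈ U2 G) ∧ tog G (tog G s) = s ∧
    tog G s ≠ s ∧ (-1:ℤ)^s.card + (-1:ℤ)^(tog G s).card = 0 := by
  classical
  obtain ⟨x0, hx0s, hx0u⟩ := hx
  have hne : (u2filt G s).Nonempty := ⟨x0, mem_u2filt.mpr ⟨hx0s, hx0u⟩⟩
  set v := (u2filt G s).min' hne with hvdef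
  have hvmem := mem_u2filt.mp ((u2filt G s).min'_mem hne)
  have hvs : v ∈ s := hvmem.1
  have hvu : v ∈ U2 G := hvmem.2
  have hd : DistToLeavesEqTwo G v := hvu.2
  set l := leafOf G v with hldef
  have hlu : l ∉ U2 G := leafOf_not_mem_U2 hd
  have hlv : l ≠ v := leafOf_ne hd
  have hnadj : ¬ G.Adj v l := not_adj_leafOf hd
  have htog : tog G s = if l ∈ s then s.erase l else insert l s := by
    rw [tog, dif_pos hne]
  -- independence of the toggled set, plus the U2-witness
  by_cases hls : l ∈ s
  · -- erase case
    rw [if_pos hls] at htog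
    have hind' : IsIndepSet G (s.erase l) := fun a ha b hb =>
      hind a (Finset.mem_of_mem_erase ha) b (Finset.mem_of_mem_erase hb)
    have hwit : ∃ x ∈ s.erase l, x ∈ U2 G :=
      ⟨v, Finset.mem_erase.mpr ⟨fun h => hlv h.symm, hvs⟩, hvu⟩
    have hu2eq : u2filt G (s.erase l) = u2filt G s := by
      ext y
      simp only [mem_u2filt, Finset.mem_erase]
      constructor
      · rintro ⟨⟨-, hy⟩, hy2⟩; exact ⟨hy, hy2⟩
      · rintro ⟨hy, hy2⟩; exact ⟨⟨fun h => hlu (h ▸ hy2), hy⟩, hy2⟩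
    have hne' : (u2filt G (s.erase l)).Nonempty := by rw [hu2eq]; exact hne
    have hvv : (u2filt G (s.erase l)).min' hne' = v := min'_congr' hu2eq hne' hne
    have htt : tog G (tog G s) = s := by
      rw [htog, tog, dif_pos hne', hvv, ← hldef,
        if_neg (Finset.notMem_erase l s), Finset.insert_erase hls]
    refine ⟨by rw [htog]; exact hind', by rw [htog]; exact hwit, htt, ?_, ?_⟩
    · rw [htog]
      intro hEq
      have hnm := Finset.notMem_erase l s
      rw [hEq] at hnm
      exact hnm hls
    · rw [htog, Finset.card_erase_of_mem hls]
      have hpos : 1 ≤ s.card := Finset.card_pos.mpr ⟨l, hls⟩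
      obtain ⟨m, hm⟩ : ∃ m, s.card = m + 1 := ⟨s.card - 1, by omega⟩
      rw [hm]
      simp [pow_succ]
  · -- insert case
    rw [if_neg hls] at htog
    have hind' : IsIndepSet G (insert l s) := by
      intro a ha b hb hab
      rcases Finset.mem_insert.mp ha with rfl | ha' <;>
        rcases Finset.mem_insert.mp hb with rfl | hb'
      · exact G.irrefl hab
      · exact hind v hvs b hb' (adj_of_adj_leafOf hd hab)
      · exact hind v hvs a ha' (adj_of_adj_leafOf hd hab.symm)
      · exact hind a ha' b hb' hab
    have hwit : ∃ x ∈ insert l s, x ∈ U2 G := ⟨v, Finset.mem_insert_of_mem hvs, hvu⟩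
    have hu2eq : u2filt G (insert l s) = u2filt G s := by
      ext y
      simp only [mem_u2filt, Finset.mem_insert]
      constructor
      · rintro ⟨h1 | h1, hy2⟩
        · exact absurd (h1 ▸ hy2) hlu
        · exact ⟨h1, hy2⟩
      · rintro ⟨hy, hy2⟩; exact ⟨Or.inr hy, hy2⟩
    have hne' : (u2filt G (insert l s)).Nonempty := by rw [hu2eq]; exact hne
    have hvv : (u2filt G (insert l s)).min' hne' = v := min'_congr' hu2eq hne' hne
    have htt : tog G (tog G s) = s := by
      rw [htog, tog, dif_pos hne', hvv, ← hldef,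
        if_pos (Finset.mem_insert_self l s), Finset.erase_insert hls]
    refine ⟨by rw [htog]; exact hind', by rw [htog]; exact hwit, htt, ?_, ?_⟩
    · rw [htog]
      intro hEq
      exact hls (hEq ▸ Finset.mem_insert_self l s)
    · rw [htog, Finset.card_insert_of_notMem hls]
      simp [pow_succ]

end Aux2
section Aux3

variable {V : Type*} [Fintype V]

lemma mem_indepFinsets {G : SimpleGraph V} {s : Finset V} :
    s ∈ indepFinsets G ↔ IsIndepSet G s := by
  classical
  rw [indepFinsets]
  constructor
  · intro h; exact (Finset.mem_filter.mp h).2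
  · intro h; exact Finset.mem_filter.mpr ⟨Finset.mem_univ s, h⟩

lemma eval_indepPoly_neg_one (G : SimpleGraph V) :
    (indepPoly G).eval (-1) = ∑ s ∈ indepFinsets G, (-1:ℤ)^s.card := by
  classical
  rw [indepPoly, Polynomial.eval_finset_sum]
  rw [← Finset.sum_fiberwise_of_maps_to (g := Finset.card)
      (t := Finset.range (indepNum G + 1))
      (fun s hs => Finset.mem_range.mpr (Nat.lt_succ_of_le (Finset.le_sup hs)))
      (fun s => (-1:ℤ)^s.card)]
  refine Finset.sum_congr rfl fun i _ => ?_
  simp only [Polynomial.eval_mul, Polynomial.eval_C, Polynomial.eval_pow, Polynomial.eval_X]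
  have hcongr : ∀ s ∈ (indepFinsets G).filter (fun s => s.card = i),
      (-1:ℤ)^s.card = (-1:ℤ)^i := by
    intro s hs
    rw [(Finset.mem_filter.mp hs).2]
  rw [Finset.sum_congr rfl hcongr, Finset.sum_const, nsmul_eq_mul]
  unfold sCount
  congr 2

open Classical in
lemma sum_indep_split (G : SimpleGraph V) [LinearOrder V] :
    ∑ s ∈ indepFinsets G, (-1:ℤ)^s.card
      = ∑ t ∈ indepFinsets (G.induce (U2 G)ᶜ), (-1:ℤ)^t.card := by
  classical
  rw [← Finset.sum_filter_add_sum_filter_not (indepFinsets G)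
      (fun s => ∃ x ∈ s, x ∈ U2 G) (fun s => (-1:ℤ)^s.card)]
  have hzero : ∑ s ∈ (indepFinsets G).filter (fun s => ∃ x ∈ s, x ∈ U2 G),
      (-1:ℤ)^s.card = 0 := by
    refine Finset.sum_involution (fun s _ => tog G s) ?_ ?_ ?_ ?_
    · intro s hs
      obtain ⟨h1, h2⟩ := Finset.mem_filter.mp hs
      exact (tog_spec G (mem_indepFinsets.mp h1) h2).2.2.2.2
    · intro s hs _
      obtain ⟨h1, h2⟩ := Finset.mem_filter.mp hs
      exact (tog_spec G (mem_indepFinsets.mp h1) h2).2.2.2.1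
    · intro s hs
      obtain ⟨h1, h2⟩ := Finset.mem_filter.mp hs
      obtain ⟨hi, hw, -, -, -⟩ := tog_spec G (mem_indepFinsets.mp h1) h2
      exact Finset.mem_filter.mpr ⟨mem_indepFinsets.mpr hi, hw⟩
    · intro s hs
      obtain ⟨h1, h2⟩ := Finset.mem_filter.mp hs
      exact (tog_spec G (mem_indepFinsets.mp h1) h2).2.2.1
  rw [hzero, zero_add]
  refine Finset.sum_nbij' (i := fun s => s.subtype (fun x => x ∈ (U2 G)ᶜ))
      (j := fun t => t.map (Function.Embedding.subtype _)) ?_ ?_ ?_ ?_ ?_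
  · -- i maps into indepFinsets of the induced graph
    intro s hs
    obtain ⟨h1, h2⟩ := Finset.mem_filter.mp hs
    have hind := mem_indepFinsets.mp h1
    refine mem_indepFinsets.mpr ?_
    intro a ha b hb hab
    have ha' : (a : V) ∈ s := by simpa using Finset.mem_subtype.mp ha
    have hb' : (b : V) ∈ s := by simpa using Finset.mem_subtype.mp hb
    exact hind a ha' b hb' hab
  · -- j maps back
    intro t ht
    have hind := mem_indepFinsets.mp ht
    refine Finset.mem_filter.mpr ⟨mem_indepFinsets.mpr ?_, ?_⟩
    · intro a ha b hb hab
      obtain ⟨a', ha', rfl⟩ := Finset.mem_map.mp ha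
      obtain ⟨b', hb', rfl⟩ := Finset.mem_map.mp hb
      exact hind a' ha' b' hb' hab
    · push_neg
      intro x hx
      obtain ⟨x', hx', rfl⟩ := Finset.mem_map.mp hx
      exact x'.2
  · -- left inverse
    intro s hs
    obtain ⟨h1, h2⟩ := Finset.mem_filter.mp hs
    push_neg at h2
    have h2' : ∀ x ∈ s, x ∈ (U2 G)ᶜ := fun x hx => h2 x hx
    exact Finset.subtype_map_of_mem h2'
  · -- right inverse
    intro t ht
    ext a
    simp only [Finset.mem_subtype, Finset.mem_map, Function.Embedding.coe_subtype]
    constructor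
    · rintro ⟨b, hb, hba⟩
      rwa [show b = a from Subtype.ext hba] at hb
    · intro ha
      exact ⟨a, ha, rfl⟩
  · -- values agree
    intro s hs
    obtain ⟨h1, h2⟩ := Finset.mem_filter.mp hs
    push_neg at h2
    have h2' : ∀ x ∈ s, x ∈ (U2 G)ᶜ := fun x hx => h2 x hx
    have : ((s.subtype (fun x => x ∈ (U2 G)ᶜ)).map (Function.Embedding.subtype _)).card
        = s.card := by rw [Finset.subtype_map_of_mem h2']
    rw [Finset.card_map] at this
    rw [this]

end Aux3

/-- `I(G,-1) = I(G - U_2, -1)`, where `G - U_2` is the induced subgraph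
on the complement of `U_2(G)`. -/
theorem eval_indepPoly_eq_eval_induce_compl_U2 {V : Type*} [Fintype V] (G : SimpleGraph V) :
    (indepPoly G).eval (-1) = (indepPoly (G.induce (U2 G)ᶜ)).eval (-1) := by
  letI : LinearOrder V := LinearOrder.lift' (fun v => (Fintype.equivFin V) v)
    (Equiv.injective _)
  rw [eval_indepPoly_neg_one, eval_indepPoly_neg_one]
  exact sum_indep_split G
end

section
/- Let C_n be the cycle on n ≥ 3 vertices. Then deg h_{C_n} = α(C_n) (= ⌊n/2⌋). -/
open Finset Polynomial

/-! ### Transfer matrix machinery -/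

/-- Transfer weight. -/
def tw (a b : Bool) : ℤ := if a && b then 0 else if a then -1 else 1

/-- Entries of the `k`-th power of the transfer matrix. -/
def tT : ℕ → Bool → Bool → ℤ
  | 0, a, b => if a = b then 1 else 0
  | k+1, a, b => ∑ c : Bool, tw a c * tT k c b

lemma tT_add (j k : ℕ) (a b : Bool) : tT (j + k) a b = ∑ c : Bool, tT j a c * tT k c b := by
  induction j generalizing a with
  | zero => simp [tT]
  | succ j ih =>
      have : j + 1 + k = (j + k) + 1 := by omega
      rw [this]
      simp only [tT, ih, Finset.mul_sum]
      rw [Finset.sum_comm]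
      congr 1; ext c
      simp only [Finset.sum_mul]
      exact Finset.sum_congr rfl (fun c _ => by ring)

lemma tT_six (k : ℕ) (a b : Bool) : tT (6 + k) a b = tT k a b := by
  rw [tT_add]
  have h6 : ∀ a c : Bool, tT 6 a c = if a = c then 1 else 0 := by decide
  simp [h6]

lemma trace_mod (k : ℕ) : ∑ a : Bool, tT k a a = ∑ a : Bool, tT (k % 6) a a := by
  induction k using Nat.strong_induction_on with
  | _ k ih =>
    by_cases h : k < 6
    · rw [Nat.mod_eq_of_lt h]
    · have hk : k = 6 + (k - 6) := by omega
      calc ∑ a : Bool, tT k a a = ∑ a : Bool, tT (6 + (k - 6)) a a := by rw [← hk]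
        _ = ∑ a : Bool, tT (k - 6) a a := by simp only [tT_six]
        _ = ∑ a : Bool, tT ((k - 6) % 6) a a := ih _ (by omega)
        _ = ∑ a : Bool, tT (k % 6) a a := by rw [show (k-6)%6 = k%6 by omega]

lemma trace_ne_zero (k : ℕ) : ∑ a : Bool, tT k a a ≠ 0 := by
  rw [trace_mod]
  have h : k % 6 < 6 := Nat.mod_lt _ (by norm_num)
  interval_cases h' : k % 6 <;> decide

/-- Walk product of a boolean word. -/
def wprod (k : ℕ) (g : Fin (k+1) → Bool) : ℤ := ∏ i : Fin k, tw (g i.castSucc) (g i.succ)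

lemma wprod_cons (k : ℕ) (c : Bool) (g : Fin (k+1) → Bool) :
    wprod (k+1) (Fin.cons c g) = tw c (g 0) * wprod k g := by
  unfold wprod
  rw [Fin.prod_univ_succ]
  congr 1

lemma walk_sum (k : ℕ) (a b : Bool) :
    ∑ g : Fin (k+1) → Bool, (if g 0 = a ∧ g (Fin.last k) = b then wprod k g else 0)
      = tT k a b := by
  induction k generalizing a with
  | zero =>
      rw [show (tT 0 a b) = ∑ c : Bool, if c = a ∧ c = b then 1 else 0 by
        cases a <;> cases b <;> simp [tT]]
      refine Fintype.sum_equiv (Equiv.funUnique (Fin 1) Bool) _ _ (fun g => ?_)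
      have : wprod 0 g = 1 := by simp [wprod]
      simp [this, Equiv.funUnique]
  | succ k ih =>
      have he := Fintype.sum_equiv (Fin.consEquiv (fun _ : Fin (k+2) => Bool))
        (fun p : Bool × (Fin (k+1) → Bool) =>
          if (Fin.cons p.1 p.2 : Fin (k+2) → Bool) 0 = a ∧
              (Fin.cons p.1 p.2 : Fin (k+2) → Bool) (Fin.last (k+1)) = b then
            wprod (k+1) (Fin.cons p.1 p.2) else 0)
        (fun g : Fin (k+2) → Bool =>
          if g 0 = a ∧ g (Fin.last (k+1)) = b then wprod (k+1) g else 0)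
        (fun p => rfl)
      rw [← he, Fintype.sum_prod_type]
      have hlast : (Fin.last (k+1)) = (Fin.last k).succ := rfl
      have step : ∀ (c : Bool) (g : Fin (k+1) → Bool),
          (if (Fin.cons c g : Fin (k+2) → Bool) 0 = a ∧
              (Fin.cons c g : Fin (k+2) → Bool) (Fin.last (k+1)) = b then
            wprod (k+1) (Fin.cons c g) else 0)
          = if c = a ∧ g (Fin.last k) = b then tw c (g 0) * wprod k g else 0 := by
        intro c g
        rw [hlast, Fin.cons_succ, wprod_cons, Fin.cons_zero]
      simp only [step]
      rw [show (∑ c : Bool, ∑ g : Fin (k+1) → Bool,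
            if c = a ∧ g (Fin.last k) = b then tw c (g 0) * wprod k g else 0)
          = ∑ g : Fin (k+1) → Bool,
            (if g (Fin.last k) = b then tw a (g 0) * wprod k g else 0) by
        rw [Finset.sum_comm]
        refine Finset.sum_congr rfl (fun g _ => ?_)
        by_cases h : g (Fin.last k) = b <;> cases a <;> simp [h]]
      rw [show tT (k+1) a b = ∑ d : Bool, tw a d * tT k d b from rfl]
      simp only [← ih, Finset.mul_sum]
      rw [Finset.sum_comm]
      refine Finset.sum_congr rfl (fun g _ => ?_)
      by_cases h : g (Fin.last k) = b <;> cases hg : g 0 <;> simp [h, hg]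

lemma cyc_sum (m : ℕ) :
    ∑ f : Fin (m+2) → Bool, ∏ i : Fin (m+2), tw (f i) (f (i+1))
      = ∑ a : Bool, tT (m+2) a a := by
  classical
  have h1 : ∑ a : Bool, tT (m+2) a a
      = ∑ g : Fin (m+3) → Bool, (if g (Fin.last (m+2)) = g 0 then wprod (m+2) g else 0) := by
    simp only [← walk_sum (m+2)]
    rw [Finset.sum_comm]
    refine Finset.sum_congr rfl (fun g _ => ?_)
    cases h0 : g 0 <;> cases hl : g (Fin.last (m+2)) <;> simp [h0, hl]
  rw [h1, ← Finset.sum_filter]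
  refine (Finset.sum_nbij' (fun g => fun i : Fin (m+2) => g i.castSucc)
    (fun f => fun j : Fin (m+3) => if h : (j : ℕ) < m+2 then f ⟨j, h⟩ else f 0)
    (fun g _ => Finset.mem_univ _) ?_ ?_ ?_ ?_).symm
  · intro f _
    simp only [Finset.mem_filter, Finset.mem_univ, true_and]
    have hl : ¬ ((Fin.last (m+2) : Fin (m+3)) : ℕ) < m + 2 := by simp
    have h0 : ((0 : Fin (m+3)) : ℕ) < m + 2 := by simp
    simp [hl, h0]
  · intro g hg
    simp only [Finset.mem_filter, Finset.mem_univ, true_and] at hg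
    funext j
    by_cases h : (j : ℕ) < m + 2
    · simp only [h, dif_pos]
      exact congrArg g (Fin.ext rfl)
    · have hj : j = Fin.last (m+2) := by
        apply Fin.ext
        simp only [Fin.val_last]
        exact Nat.le_antisymm (Nat.lt_succ_iff.mp j.isLt) (Nat.not_lt.mp h)
      simp only [h, dif_neg, not_false_iff]
      rw [hj, hg]
      rfl
  · intro f _
    funext i
    have h : ((i.castSucc : Fin (m+3)) : ℕ) < m + 2 := i.isLt
    simp only [h, dif_pos]
    exact congrArg f (Fin.ext rfl)
  · intro g hg
    simp only [Finset.mem_filter, Finset.mem_univ, true_and] at hg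
    unfold wprod
    refine Finset.prod_congr rfl (fun i _ => ?_)
    have harg : g i.succ = g ((i + 1 : Fin (m+2)).castSucc) := by
      have hv : ((i + 1 : Fin (m+2)) : ℕ) = ((i : ℕ) + 1) % (m + 2) := by
        rw [Fin.add_def]
        simp
      by_cases h : (i : ℕ) < m + 1
      · have he : (i + 1 : Fin (m+2)).castSucc = i.succ := by
          apply Fin.ext
          simp only [Fin.coe_castSucc, hv, Fin.val_succ]
          exact Nat.mod_eq_of_lt (Nat.add_lt_add_right h 1)
        rw [he]
      · have hi : (i : ℕ) = m + 1 :=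
          Nat.le_antisymm (Nat.lt_succ_iff.mp i.isLt) (Nat.not_lt.mp h)
        have h1 : i.succ = Fin.last (m+2) := by
          apply Fin.ext; simp [hi]
        have h2 : (i + 1 : Fin (m+2)).castSucc = (0 : Fin (m+3)) := by
          apply Fin.ext
          simp only [Fin.coe_castSucc, hv, hi, Fin.val_zero]
          exact Nat.mod_self (m+2)
        rw [h1, hg, h2]
    rw [harg]

/-! ### Graph-side lemmas -/

lemma adj_succ (m : ℕ) (i : Fin (m+2)) : (SimpleGraph.cycleGraph (m+2)).Adj i (i+1) := by
  rw [SimpleGraph.cycleGraph_adj]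
  right
  exact add_sub_cancel_left i 1

lemma indep_iff (m : ℕ) (S : Finset (Fin (m+2))) :
    IsIndepSet (SimpleGraph.cycleGraph (m+2)) S ↔
      ∀ i : Fin (m+2), ¬ (i ∈ S ∧ i + 1 ∈ S) := by
  constructor
  · intro h i ⟨h1, h2⟩
    exact h i h1 (i+1) h2 (adj_succ m i)
  · intro h u hu v hv hadj
    rw [SimpleGraph.cycleGraph_adj] at hadj
    rcases hadj with hs | hs
    · have : u = v + 1 := by rw [← hs]; abel
      exact h v ⟨hv, this ▸ hu⟩
    · have : v = u + 1 := by rw [← hs]; abel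
      exact h u ⟨hu, this ▸ hv⟩

lemma prod_tw_indep (m : ℕ) (S : Finset (Fin (m+2))) [DecidablePred (· ∈ S)]
    (hs : IsIndepSet (SimpleGraph.cycleGraph (m+2)) S) :
    ∏ i : Fin (m+2), tw (decide (i ∈ S)) (decide ((i+1) ∈ S)) = (-1 : ℤ)^S.card := by
  classical
  rw [indep_iff] at hs
  have hterm : ∀ i : Fin (m+2), tw (decide (i ∈ S)) (decide ((i+1) ∈ S))
      = (-1 : ℤ) ^ (if i ∈ S then 1 else 0) := by
    intro i
    by_cases h1 : i ∈ S <;> by_cases h2 : i + 1 ∈ S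
    · exact absurd ⟨h1, h2⟩ (hs i)
    · simp [tw, h1, h2]
    · simp [tw, h1, h2]
    · simp [tw, h1, h2]
  rw [Finset.prod_congr rfl (fun i _ => hterm i), Finset.prod_pow_eq_pow_sum]
  congr 1
  simp [Finset.sum_ite_mem]

lemma prod_tw_not_indep (m : ℕ) (S : Finset (Fin (m+2))) [DecidablePred (· ∈ S)]
    (hs : ¬ IsIndepSet (SimpleGraph.cycleGraph (m+2)) S) :
    ∏ i : Fin (m+2), tw (decide (i ∈ S)) (decide ((i+1) ∈ S)) = 0 := by
  rw [indep_iff] at hs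
  push_neg at hs
  obtain ⟨i, h1, h2⟩ := hs
  exact Finset.prod_eq_zero (Finset.mem_univ i) (by simp [tw, h1, h2])

lemma alt_sum_eq_trace (m : ℕ) :
    ∑ S ∈ indepFinsets (SimpleGraph.cycleGraph (m+2)), (-1 : ℤ)^S.card
      = ∑ a : Bool, tT (m+2) a a := by
  classical
  rw [← cyc_sum]
  have he := Fintype.sum_equiv
    (show Finset (Fin (m+2)) ≃ (Fin (m+2) → Bool) from
      ⟨fun S i => decide (i ∈ S), fun f => Finset.univ.filter (fun i => f i = true),
       fun S => by ext i; simp, fun f => by funext i; simp⟩)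
    (fun S : Finset (Fin (m+2)) => ∏ i : Fin (m+2), tw (decide (i ∈ S)) (decide ((i+1) ∈ S)))
    (fun f : Fin (m+2) → Bool => ∏ i : Fin (m+2), tw (f i) (f (i+1)))
    (fun S => rfl)
  rw [← he]
  unfold indepFinsets
  rw [Finset.sum_filter]
  refine Finset.sum_congr rfl (fun S _ => ?_)
  by_cases hs : IsIndepSet (SimpleGraph.cycleGraph (m+2)) S
  · rw [if_pos hs, prod_tw_indep m S hs]
  · rw [if_neg hs, prod_tw_not_indep m S hs]

lemma card_le_indepNum {V : Type*} [Fintype V] (G : SimpleGraph V) (S : Finset V)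
    (hS : S ∈ indepFinsets G) : S.card ≤ indepNum G :=
  Finset.le_sup hS

lemma hPoly_coeff_top {V : Type*} [Fintype V] (G : SimpleGraph V) :
    (hPoly G).coeff (indepNum G)
      = (-1 : ℤ) ^ (indepNum G) * ∑ S ∈ indepFinsets G, (-1 : ℤ)^S.card := by
  classical
  set α := indepNum G with hα
  have hcoeff : (hPoly G).coeff α
      = ∑ i ∈ Finset.range (α + 1), (sCount G i : ℤ) * (-1)^(α - i) := by
    unfold hPoly
    rw [Polynomial.finset_sum_coeff]
    refine Finset.sum_congr rfl (fun i hi => ?_)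
    have hiα : i ≤ α := Nat.lt_succ_iff.mp (Finset.mem_range.mp hi)
    rw [mul_assoc, Polynomial.coeff_C_mul]
    congr 1
    have h3 : ((1 - Polynomial.X : Polynomial ℤ)^(α - i)).coeff (α - i) = (-1)^(α - i) := by
      have h2 : (1 - Polynomial.X : Polynomial ℤ) = -(Polynomial.X - Polynomial.C 1) := by
        rw [Polynomial.C_1]; ring
      rw [h2, neg_pow]
      rw [show ((-1 : Polynomial ℤ)^(α - i)) = Polynomial.C ((-1 : ℤ)^(α - i)) by
        simp [map_pow]]
      rw [Polynomial.coeff_C_mul]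
      have hm : ((Polynomial.X - Polynomial.C (1:ℤ))^(α - i)).Monic :=
        (Polynomial.monic_X_sub_C 1).pow (α - i)
      have hd : ((Polynomial.X - Polynomial.C (1:ℤ))^(α - i)).natDegree = α - i := by
        rw [(Polynomial.monic_X_sub_C (1:ℤ)).natDegree_pow, Polynomial.natDegree_X_sub_C,
          mul_one]
      have hco := hm.coeff_natDegree
      rw [hd] at hco
      rw [hco, mul_one]
    have hc := Polynomial.coeff_X_pow_mul ((1 - Polynomial.X : Polynomial ℤ)^(α - i)) i (α - i)
    rw [show α - i + i = α by omega] at hc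
    rw [hc, h3]
  rw [hcoeff]
  have hsplit : ∀ i ∈ Finset.range (α + 1), (sCount G i : ℤ) * (-1 : ℤ)^(α - i)
      = (-1 : ℤ)^α * ((sCount G i : ℤ) * (-1 : ℤ)^i) := by
    intro i hi
    have hiα : i ≤ α := Nat.lt_succ_iff.mp (Finset.mem_range.mp hi)
    have hsq : ((-1:ℤ)^i) * (-1:ℤ)^i = 1 := by
      rw [← pow_add]
      exact Even.neg_one_pow ⟨i, rfl⟩
    have key : (-1:ℤ)^(α - i) = (-1:ℤ)^α * (-1:ℤ)^i := by
      calc (-1:ℤ)^(α-i) = (-1:ℤ)^(α-i) * (((-1:ℤ)^i) * (-1:ℤ)^i) := by rw [hsq, mul_one]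
        _ = ((-1:ℤ)^(α-i) * (-1:ℤ)^i) * (-1:ℤ)^i := by ring
        _ = (-1:ℤ)^α * (-1:ℤ)^i := by rw [← pow_add, show α - i + i = α by omega]
    rw [key]; ring
  rw [Finset.sum_congr rfl hsplit, ← Finset.mul_sum]
  congr 1
  -- fiberwise sum
  rw [← Finset.sum_fiberwise_of_maps_to
    (fun S hS => Finset.mem_range.mpr (Nat.lt_succ_iff.mpr (card_le_indepNum G S hS)))
    (fun S => (-1 : ℤ)^S.card)]
  refine Finset.sum_congr rfl (fun i _ => ?_)
  have : ∀ S ∈ (indepFinsets G).filter (fun S => S.card = i),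
      (-1 : ℤ)^S.card = (-1 : ℤ)^i := by
    intro S hS
    rw [(Finset.mem_filter.mp hS).2]
  rw [Finset.sum_congr rfl this, Finset.sum_const, nsmul_eq_mul]
  congr 1

lemma hPoly_natDegree_le {V : Type*} [Fintype V] (G : SimpleGraph V) :
    (hPoly G).natDegree ≤ indepNum G := by
  refine le_trans (Polynomial.natDegree_sum_le _ _) ?_
  rw [Finset.fold_max_le]
  refine ⟨Nat.zero_le _, fun i hi => ?_⟩
  have hiα : i ≤ indepNum G := Nat.lt_succ_iff.mp (Finset.mem_range.mp hi)
  simp only [Function.comp]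
  refine le_trans Polynomial.natDegree_mul_le ?_
  have h1 : (Polynomial.C (sCount G i : ℤ) * Polynomial.X ^ i).natDegree ≤ i := by
    refine le_trans Polynomial.natDegree_mul_le ?_
    simp [Polynomial.natDegree_C, Polynomial.natDegree_X_pow]
  have h2 : ((1 - Polynomial.X : Polynomial ℤ) ^ (indepNum G - i)).natDegree
      ≤ indepNum G - i := by
    refine le_trans Polynomial.natDegree_pow_le ?_
    have : (1 - Polynomial.X : Polynomial ℤ).natDegree ≤ 1 := by
      refine le_trans (Polynomial.natDegree_sub_le _ _) ?_
      simp [Polynomial.natDegree_one, Polynomial.natDegree_X]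
    calc (indepNum G - i) * (1 - Polynomial.X : Polynomial ℤ).natDegree
        ≤ (indepNum G - i) * 1 := Nat.mul_le_mul_left _ this
      _ = indepNum G - i := mul_one _
  omega

lemma indep_card_le (m : ℕ) (S : Finset (Fin (m+2)))
    (hS : IsIndepSet (SimpleGraph.cycleGraph (m+2)) S) : 2 * S.card ≤ m + 2 := by
  classical
  have hmaps : ∀ a ∈ S, a + 1 ∈ Finset.univ \ S := by
    intro a ha
    simp only [Finset.mem_sdiff, Finset.mem_univ, true_and]
    intro hmem
    exact hS a ha (a+1) hmem (adj_succ m a)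
  have hinj : Set.InjOn (· + 1) (S : Set (Fin (m+2))) := fun x _ y _ h => by
    exact add_right_cancel h
  have hle := Finset.card_le_card_of_injOn (· + 1) hmaps hinj
  have hsd : (Finset.univ \ S).card = (m+2) - S.card := by
    rw [Finset.card_sdiff_of_subset (Finset.subset_univ S)]
    simp
  have hcu : S.card ≤ m + 2 := by
    simpa using Finset.card_le_univ S
  omega

lemma evens_indep (m : ℕ) :
    IsIndepSet (SimpleGraph.cycleGraph (m+2))
      ((Finset.univ : Finset (Fin ((m+2)/2))).image
        (fun k => (⟨2 * k.val, by have := k.isLt; omega⟩ : Fin (m+2)))) := by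
  intro u hu v hv hadj
  simp only [Finset.mem_image, Finset.mem_univ, true_and] at hu hv
  obtain ⟨a, rfl⟩ := hu
  obtain ⟨b, rfl⟩ := hv
  rw [SimpleGraph.cycleGraph_adj] at hadj
  have ha := a.isLt
  have hb := b.isLt
  have hmod : ∀ x y : Fin (m+2), x - y = 1 → ((m+2) - y.val + x.val) % (m+2) = 1 := by
    intro x y h
    rw [Fin.sub_def] at h
    have := congrArg Fin.val h
    simpa using this
  rcases hadj with h | h
  · have h1 := hmod _ _ h
    simp only at h1
    set x := (m + 2) - 2 * b.val + 2 * a.val with hx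
    have hxlt : x < 2 * (m + 2) := by omega
    rcases Nat.lt_or_ge x (m+2) with hc | hc
    · rw [Nat.mod_eq_of_lt hc] at h1; omega
    · rw [Nat.mod_eq_sub_mod hc, Nat.mod_eq_of_lt (by omega)] at h1; omega
  · have h1 := hmod _ _ h
    simp only at h1
    set x := (m + 2) - 2 * a.val + 2 * b.val with hx
    have hxlt : x < 2 * (m + 2) := by omega
    rcases Nat.lt_or_ge x (m+2) with hc | hc
    · rw [Nat.mod_eq_of_lt hc] at h1; omega
    · rw [Nat.mod_eq_sub_mod hc, Nat.mod_eq_of_lt (by omega)] at h1; omega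

lemma indepNum_cycle (m : ℕ) : indepNum (SimpleGraph.cycleGraph (m+2)) = (m+2)/2 := by
  classical
  apply le_antisymm
  · apply Finset.sup_le
    intro S hS
    simp only [indepFinsets, Finset.mem_filter, Finset.mem_univ, true_and] at hS
    have := indep_card_le m S hS
    omega
  · have hmem : ((Finset.univ : Finset (Fin ((m+2)/2))).image
        (fun k => (⟨2 * k.val, by have := k.isLt; omega⟩ : Fin (m+2)))) ∈
        indepFinsets (SimpleGraph.cycleGraph (m+2)) := by
      simp only [indepFinsets, Finset.mem_filter, Finset.mem_univ, true_and]
      exact evens_indep m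
    have hcard : ((Finset.univ : Finset (Fin ((m+2)/2))).image
        (fun k => (⟨2 * k.val, by have := k.isLt; omega⟩ : Fin (m+2)))).card = (m+2)/2 := by
      rw [Finset.card_image_of_injective _ (fun x y h => by
        have := congrArg Fin.val h
        simp only at this
        exact Fin.ext (by omega))]
      simp
    calc (m+2)/2 = _ := hcard.symm
      _ ≤ _ := Finset.le_sup hmem

/-- For the cycle `C_n` on `n ≥ 3` vertices,
`deg h_{C_n} = α(C_n) = ⌊n/2⌋`. -/
theorem degree_hPoly_cycleGraph (n : ℕ) (hn : 3 ≤ n) :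
    (hPoly (SimpleGraph.cycleGraph n)).natDegree = indepNum (SimpleGraph.cycleGraph n) ∧
    indepNum (SimpleGraph.cycleGraph n) = n / 2 := by
  obtain ⟨m, rfl⟩ : ∃ m, n = m + 2 := ⟨n - 2, by omega⟩
  refine ⟨?_, indepNum_cycle m⟩
  set G := SimpleGraph.cycleGraph (m+2) with hG
  refine le_antisymm (hPoly_natDegree_le G) (Polynomial.le_natDegree_of_ne_zero ?_)
  rw [hPoly_coeff_top G, alt_sum_eq_trace m]
  exact mul_ne_zero (pow_ne_zero _ (by norm_num)) (trace_ne_zero (m+2))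
end

section
/- Let G_1, …, G_k (k ≥ 1) be finite simple graphs on pairwise disjoint nonempty vertex sets, and let G = G_1 + ⋯ + G_k be their Zykov sum. Then deg h_G = α(G) if and only if Σ_{i=1}^{k} I(G_i, −1) ≠ k − 1. -/
open Finset Polynomial

/-- The Zykov sum (join) of a family of simple graphs on disjoint vertex sets, as a graph
on the sigma type: adjacency within a summand is inherited, and any two vertices from
different summands are adjacent. -/
def zykovSum {ι : Type*} {V : ι → Type*} (G : ∀ i, SimpleGraph (V i)) :
    SimpleGraph (Σ i, V i) where
  Adj x y := (∃ (i : ι) (u v : V i), (G i).Adj u v ∧ x = ⟨i, u⟩ ∧ y = ⟨i, v⟩) ∨ x.1 ≠ y.1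
  symm := by
    constructor
    rintro x y (⟨i, u, v, h, rfl, rfl⟩ | h)
    · exact Or.inl ⟨i, v, u, h.symm, rfl, rfl⟩
    · exact Or.inr h.symm
  loopless := by
    constructor
    rintro x (⟨i, u, v, h, rfl, hy⟩ | h)
    · rw [Sigma.mk.inj_iff] at hy
      obtain ⟨-, hy⟩ := hy
      exact (G i).irrefl (by cases hy; exact h)
    · exact h rfl

section Aux

variable {V : Type*} [Fintype V]

lemma empty_mem_indepFinsets (G : SimpleGraph V) : ∅ ∈ indepFinsets G := by
  rw [indepFinsets, @Finset.mem_filter _ _ (Classical.decPred _)]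
  exact ⟨Finset.mem_univ _, by simp [IsIndepSet]⟩

lemma card_le_indepNum_s12 {G : SimpleGraph V} {s : Finset V} (hs : s ∈ indepFinsets G) :
    s.card ≤ indepNum G :=
  Finset.le_sup hs

lemma indepPoly_eval (G : SimpleGraph V) (x : ℤ) :
    (indepPoly G).eval x = ∑ s ∈ indepFinsets G, x ^ s.card := by
  rw [indepPoly, Polynomial.eval_finset_sum,
    ← Finset.sum_fiberwise_of_maps_to (g := Finset.card) (t := Finset.range (indepNum G + 1))
      (fun s hs => Finset.mem_range.mpr (Nat.lt_succ_of_le (card_le_indepNum_s12 hs)))]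
  refine Finset.sum_congr rfl fun i _ => ?_
  rw [Finset.sum_congr rfl (fun s hs => by
    rw [(Finset.mem_filter.mp hs).2]), Finset.sum_const, sCount]
  simp [nsmul_eq_mul, mul_comm]

lemma sCount_zero (G : SimpleGraph V) : sCount G 0 = 1 := by
  rw [sCount]
  convert Finset.card_singleton (∅ : Finset V) using 2
  ext s
  simp only [Finset.mem_filter, Finset.card_eq_zero, Finset.mem_singleton]
  exact ⟨fun h => h.2, fun h => ⟨h ▸ empty_mem_indepFinsets G, h⟩⟩

lemma coeff_zero_hPoly (G : SimpleGraph V) : (hPoly G).coeff 0 = 1 := by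
  rw [Polynomial.coeff_zero_eq_eval_zero, hPoly, Polynomial.eval_finset_sum,
    Finset.sum_eq_single 0 (by intro i _ hi; simp [zero_pow hi]) (by simp)]
  simp [sCount_zero]

lemma coeff_one_sub_pow (n : ℕ) : ((1 - Polynomial.X : Polynomial ℤ) ^ n).coeff n = (-1) ^ n := by
  have h1 : (1 - Polynomial.X : Polynomial ℤ) = Polynomial.C (-1) * (Polynomial.X - Polynomial.C 1) := by
    ring_nf
    simp [Polynomial.C_1]
    ring
  have hm : ((Polynomial.X - Polynomial.C (1 : ℤ)) ^ n).coeff n = 1 := by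
    have := (Polynomial.monic_X_sub_C (1 : ℤ)).pow n
    have hd : ((Polynomial.X - Polynomial.C (1 : ℤ)) ^ n).natDegree = n := by
      rw [Polynomial.natDegree_pow, Polynomial.natDegree_X_sub_C, mul_one]
    have := this.coeff_natDegree
    rwa [hd] at this
  rw [h1, mul_pow, ← Polynomial.C_pow, Polynomial.coeff_C_mul, hm, mul_one]

lemma natDegree_hPoly_le (G : SimpleGraph V) : (hPoly G).natDegree ≤ indepNum G := by
  refine Polynomial.natDegree_sum_le_of_forall_le _ _ fun i hi => ?_
  have hi' : i ≤ indepNum G := Nat.lt_succ_iff.mp (Finset.mem_range.mp hi)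
  calc (Polynomial.C (sCount G i : ℤ) * Polynomial.X ^ i *
        (1 - Polynomial.X) ^ (indepNum G - i)).natDegree
      ≤ (Polynomial.C (sCount G i : ℤ) * Polynomial.X ^ i).natDegree
        + ((1 - Polynomial.X : Polynomial ℤ) ^ (indepNum G - i)).natDegree :=
        Polynomial.natDegree_mul_le
    _ ≤ i + (indepNum G - i) := by
        refine add_le_add ?_ ?_
        · exact (Polynomial.natDegree_C_mul_le _ _).trans (by simp)
        · refine (Polynomial.natDegree_pow_le).trans ?_
          have h1 : (1 - Polynomial.X : Polynomial ℤ).natDegree ≤ 1 :=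
            (Polynomial.natDegree_sub_le _ _).trans (by simp)
          calc (indepNum G - i) * (1 - Polynomial.X : Polynomial ℤ).natDegree
              ≤ (indepNum G - i) * 1 := Nat.mul_le_mul_left _ h1
            _ = indepNum G - i := Nat.mul_one _
    _ = indepNum G := Nat.add_sub_cancel' hi'

lemma coeff_top_hPoly (G : SimpleGraph V) :
    (hPoly G).coeff (indepNum G) = (-1) ^ indepNum G * (indepPoly G).eval (-1) := by
  rw [hPoly, Polynomial.finset_sum_coeff, indepPoly, Polynomial.eval_finset_sum,
    Finset.mul_sum]
  refine Finset.sum_congr rfl fun i hi => ?_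
  have hi' : i ≤ indepNum G := Nat.lt_succ_iff.mp (Finset.mem_range.mp hi)
  rw [mul_assoc, Polynomial.coeff_C_mul]
  have key : ((Polynomial.X ^ i * (1 - Polynomial.X) ^ (indepNum G - i)
      : Polynomial ℤ)).coeff (indepNum G) = (-1) ^ (indepNum G - i) := by
    have h := Polynomial.coeff_X_pow_mul
      ((1 - Polynomial.X : Polynomial ℤ) ^ (indepNum G - i)) i (indepNum G - i)
    rw [Nat.sub_add_cancel hi'] at h
    rw [h, coeff_one_sub_pow]
  rw [key]
  simp only [Polynomial.eval_mul, Polynomial.eval_C, Polynomial.eval_pow, Polynomial.eval_X]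
  have hpow : (-1 : ℤ) ^ (indepNum G - i) * (-1) ^ i = (-1) ^ indepNum G := by
    rw [← pow_add, Nat.sub_add_cancel hi']
  have hB : ((-1 : ℤ) ^ i) * ((-1 : ℤ) ^ i) = 1 := by
    rw [← mul_pow]; norm_num
  rw [← hpow]
  linear_combination (-((sCount G i : ℤ) * (-1 : ℤ) ^ (indepNum G - i))) * hB

lemma natDegree_hPoly_eq_iff (G : SimpleGraph V) :
    (hPoly G).natDegree = indepNum G ↔ (indepPoly G).eval (-1) ≠ 0 := by
  have hne : hPoly G ≠ 0 := fun h => by simpa [h] using coeff_zero_hPoly G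
  constructor
  · intro h he
    have : (hPoly G).coeff (indepNum G) = 0 := by rw [coeff_top_hPoly, he, mul_zero]
    rw [← h] at this
    exact hne (Polynomial.leadingCoeff_eq_zero.mp this)
  · intro h
    have : (hPoly G).coeff (indepNum G) ≠ 0 := by
      rw [coeff_top_hPoly]
      exact mul_ne_zero (pow_ne_zero _ (by norm_num)) h
    exact le_antisymm (natDegree_hPoly_le G) (Polynomial.le_natDegree_of_ne_zero this)

end Aux

section Zykov

variable {ι : Type*} [Fintype ι] {V : ι → Type*} [∀ i, Fintype (V i)]

open scoped Classical

/-- The canonical embedding of a summand into the sigma type. -/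
def sigmaEmb (i : ι) : V i ↪ Σ j, V j := ⟨Sigma.mk i, sigma_mk_injective⟩

lemma indepFinsets_zykovSum (G : ∀ i, SimpleGraph (V i)) :
    indepFinsets (zykovSum G) = insert ∅ (Finset.univ.biUnion fun i =>
      ((indepFinsets (G i)).erase ∅).image (fun t => t.map (sigmaEmb i))) := by
  ext s
  simp only [Finset.mem_insert, Finset.mem_biUnion, Finset.mem_univ, true_and,
    Finset.mem_image, Finset.mem_erase, indepFinsets, Finset.mem_filter]
  constructor
  · intro hind
    rcases eq_or_ne s ∅ with rfl | hne
    · exact Or.inl rfl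
    · obtain ⟨x, hx⟩ := Finset.nonempty_iff_ne_empty.mpr hne
      refine Or.inr ⟨x.1, s.preimage (Sigma.mk x.1) sigma_mk_injective.injOn, ⟨?_, ?_⟩, ?_⟩
      · -- preimage nonempty
        intro h
        have : x.2 ∈ s.preimage (Sigma.mk x.1) sigma_mk_injective.injOn := by
          simp [Finset.mem_preimage, hx]
        simp [h] at this
      · intro u hu v hv hadj
        rw [Finset.mem_preimage] at hu hv
        exact hind _ hu _ hv (Or.inl ⟨x.1, u, v, hadj, rfl, rfl⟩)
      · -- every element of s has first component x.1
        have hfst : ∀ y ∈ s, y.1 = x.1 := fun y hy => by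
          by_contra h
          exact hind y hy x hx (Or.inr h)
        ext y
        simp only [Finset.mem_map, Finset.mem_preimage, sigmaEmb,
          Function.Embedding.coeFn_mk]
        constructor
        · rintro ⟨v, hv, rfl⟩; exact hv
        · intro hy
          obtain ⟨j, v⟩ := y
          have : j = x.1 := hfst _ hy
          subst this
          exact ⟨v, hy, rfl⟩
  · rintro (rfl | ⟨i, t, ⟨-, hind⟩, rfl⟩)
    · exact fun u hu => by simp at hu
    · intro u hu v hv hadj
      simp only [Finset.mem_map, sigmaEmb, Function.Embedding.coeFn_mk] at hu hv
      obtain ⟨a, ha, rfl⟩ := hu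
      obtain ⟨b, hb, rfl⟩ := hv
      rcases hadj with ⟨j, p, q, h, h1, h2⟩ | h
      · obtain ⟨rfl, h1⟩ := Sigma.mk.inj_iff.mp h1
        obtain ⟨-, h2⟩ := Sigma.mk.inj_iff.mp h2
        cases h1; cases h2
        exact hind a ha b hb h
      · exact h rfl

lemma eval_indepPoly_zykovSum (G : ∀ i, SimpleGraph (V i)) (x : ℤ) :
    (indepPoly (zykovSum G)).eval x =
      1 + ∑ i, ((indepPoly (G i)).eval x - 1) := by
  rw [indepPoly_eval, indepFinsets_zykovSum]
  have hnotmem : (∅ : Finset (Σ j, V j)) ∉ Finset.univ.biUnion fun i =>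
      ((indepFinsets (G i)).erase ∅).image (fun t => t.map (sigmaEmb i)) := by
    simp only [Finset.mem_biUnion, Finset.mem_image, Finset.mem_erase, not_exists, not_and]
    rintro i - t ⟨hne, -⟩ h
    exact hne (Finset.map_eq_empty.mp h)
  have hdisj : (↑(Finset.univ : Finset ι) : Set ι).PairwiseDisjoint fun i =>
      ((indepFinsets (G i)).erase ∅).image (fun t => t.map (sigmaEmb i)) := by
    intro i _ j _ hij
    rw [Function.onFun, Finset.disjoint_left]
    rintro s hs hs'
    simp only [Finset.mem_image, Finset.mem_erase] at hs hs'
    obtain ⟨t, ⟨hne, -⟩, rfl⟩ := hs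
    obtain ⟨t', ⟨-, -⟩, heq⟩ := hs'
    obtain ⟨v, hv⟩ := Finset.nonempty_iff_ne_empty.mpr hne
    have : (⟨i, v⟩ : Σ j, V j) ∈ t'.map (sigmaEmb j) := by
      rw [heq]
      exact Finset.mem_map_of_mem _ hv
    simp only [Finset.mem_map, sigmaEmb, Function.Embedding.coeFn_mk] at this
    obtain ⟨w, -, hw⟩ := this
    exact hij (Sigma.mk.inj_iff.mp hw).1.symm
  rw [Finset.sum_insert hnotmem, Finset.sum_biUnion hdisj]
  simp only [Finset.card_empty, pow_zero]
  congr 1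
  refine Finset.sum_congr rfl fun i _ => ?_
  rw [Finset.sum_image (fun t1 _ t2 _ h => Finset.map_injective _ h)]
  simp only [Finset.card_map]
  rw [Finset.sum_erase_eq_sub (empty_mem_indepFinsets (G i)), indepPoly_eval]
  simp

end Zykov

/-- For the Zykov sum `G = G_1 + ⋯ + G_k` (`k ≥ 1`) of graphs on
pairwise disjoint nonempty vertex sets, `deg h_G = α(G)` iff
`Σ_{i=1}^{k} I(G_i,-1) ≠ k - 1`. -/
theorem degree_hPoly_zykovSum {k : ℕ} (hk : 1 ≤ k) {V : Fin k → Type*} [∀ i, Fintype (V i)]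
    [∀ i, Nonempty (V i)] (G : ∀ i, SimpleGraph (V i)) :
    (hPoly (zykovSum G)).natDegree = indepNum (zykovSum G) ↔
      ∑ i, (indepPoly (G i)).eval (-1) ≠ (k : ℤ) - 1 := by
  rw [natDegree_hPoly_eq_iff, eval_indepPoly_zykovSum]
  have : 1 + ∑ i, ((indepPoly (G i)).eval (-1) - 1)
      = ∑ i, (indepPoly (G i)).eval (-1) - ((k : ℤ) - 1) := by
    rw [Finset.sum_sub_distrib]
    simp [Finset.card_univ]
    ring
  rw [this, sub_ne_zero]
end
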